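/- For each integer i ≥ 3, the set F_i of real numbers x ∈ [0,1) whose binary expansion contains no i-term arithmetic progression among the positions of digit 1 is a closed subset of [0,1). -/
import Mathlib


open Filter MeasureTheory Set

/-- The `n`-th binary digit of `x ∈ [0,1)` (dyadic rationals get the
terminating expansion, i.e. the one with finitely many `1`'s). -/
noncomputable def digit (x : ℝ) (n : ℕ) : ℕ := (⌊x * 2 ^ n⌋).toNat % 2

/-- Positions of digit `1` in the binary expansion of `x`. -/
def onesOf (x : ℝ) : Set ℕ := {n : ℕ | digit x n = 1}

/-- `A` contains an `m`-term arithmetic progression. -/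
def HasAP (A : Set ℕ) (m : ℕ) : Prop :=
  ∃ a d : ℕ, 1 ≤ d ∧ ∀ t < m, a + t * d ∈ A

/-- `F i`: numbers in `[0,1)` whose binary expansion contains no `i`-term
arithmetic progression of positions of digit `1`. -/
noncomputable def F (i : ℕ) : Set ℝ :=
  {x ∈ Set.Ico (0 : ℝ) 1 | ¬ HasAP (onesOf x) i}

/-- The Erdős set. -/
noncomputable def E : Set ℝ := ⋃ i, ⋃ (_ : 3 ≤ i), F i

lemma myfloor_div (a : ℝ) (b : ℤ) (hb : 0 < b) : ⌊a / b⌋ = ⌊a⌋ / b := by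
  have hb' : (0:ℝ) < (b:ℝ) := by exact_mod_cast hb
  rw [Int.floor_eq_iff]
  constructor
  · rw [le_div_iff₀ hb']
    calc ((⌊a⌋ / b : ℤ) : ℝ) * b = ((⌊a⌋ / b * b : ℤ) : ℝ) := by push_cast; ring
    _ ≤ (⌊a⌋ : ℝ) := by exact_mod_cast Int.ediv_mul_le ⌊a⌋ (ne_of_gt hb)
    _ ≤ a := Int.floor_le a
  · rw [div_lt_iff₀ hb']
    calc a < (⌊a⌋ : ℝ) + 1 := Int.lt_floor_add_one a
    _ ≤ ((⌊a⌋ / b + 1) * b : ℤ) := by exact_mod_cast Int.lt_ediv_add_one_mul_self ⌊a⌋ hb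
    _ = ((⌊a⌋ / b : ℤ) + 1) * (b:ℝ) := by push_cast; ring

lemma floor_pow_eq (z : ℝ) {n N : ℕ} (h : n ≤ N) :
    ⌊z * 2 ^ n⌋ = ⌊z * 2 ^ N⌋ / 2 ^ (N - n) := by
  have e : z * 2 ^ n = (z * 2 ^ N) / ((2 ^ (N - n) : ℤ) : ℝ) := by
    push_cast
    rw [eq_div_iff (by positivity), mul_assoc, ← pow_add]
    congr 2
    omega
  rw [e, myfloor_div _ _ (by positivity)]

lemma digit_eq_of_floor_eq {x y : ℝ} {N : ℕ} (h : ⌊x * 2 ^ N⌋ = ⌊y * 2 ^ N⌋)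
    {n : ℕ} (hn : n ≤ N) : digit x n = digit y n := by
  unfold digit
  rw [floor_pow_eq x hn, floor_pow_eq y hn, h]

theorem stmt4 (i : ℕ) (hi : 3 ≤ i) :
    IsClosed {p : Set.Ico (0 : ℝ) 1 | (p : ℝ) ∈ F i} := by
  rw [← isOpen_compl_iff, Metric.isOpen_iff]
  rintro ⟨x, hx0, hx1⟩ hp
  simp only [mem_compl_iff, mem_setOf_eq, F, not_and, not_not] at hp
  obtain ⟨a, d, hd, hAP⟩ := hp ⟨hx0, hx1⟩
  set N := a + (i - 1) * d with hN
  set m := ⌊x * 2 ^ N⌋ with hm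
  have hm0 : 0 ≤ m := Int.floor_nonneg.2 (by positivity)
  have hlo : (m : ℝ) / 2 ^ N ≤ x := by
    rw [div_le_iff₀ (by positivity)]
    exact Int.floor_le _
  have hhi : x < ((m : ℝ) + 1) / 2 ^ N := by
    rw [lt_div_iff₀ (by positivity)]
    have h := Int.lt_floor_add_one (x * 2 ^ N)
    push_cast at h ⊢
    linarith
  -- same level-N floor ⟹ has the same AP
  have key : ∀ y : ℝ, (m : ℝ) / 2 ^ N ≤ y → y < ((m : ℝ) + 1) / 2 ^ N →
      HasAP (onesOf y) i := by
    intro y h1 h2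
    have hfl : ⌊y * 2 ^ N⌋ = m := by
      rw [Int.floor_eq_iff]
      constructor
      · calc (m : ℝ) = (m : ℝ) / 2 ^ N * 2 ^ N := by field_simp
          _ ≤ y * 2 ^ N := by gcongr
      · calc y * 2 ^ N < ((m : ℝ) + 1) / 2 ^ N * 2 ^ N := by gcongr
          _ = (m : ℝ) + 1 := by field_simp
    refine ⟨a, d, hd, fun t ht => ?_⟩
    have htN : a + t * d ≤ N := by
      have ht' : t ≤ i - 1 := by omega
      have : t * d ≤ (i - 1) * d := Nat.mul_le_mul_right d ht'
      omega
    have := digit_eq_of_floor_eq (hfl.trans hm) htN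
    exact this.trans (hAP t ht)
  -- just left of a dyadic point there is a long run of ones
  have left_dyadic : ∀ y : ℝ, 0 ≤ y → x = (m : ℝ) / 2 ^ N →
      x - 1 / 2 ^ (N + i) ≤ y → y < x → HasAP (onesOf y) i := by
    intro y hy0 hxd h1 h2
    have hm1 : 1 ≤ m := by
      by_contra h
      have hm' : m = 0 := by omega
      rw [hm', Int.cast_zero, zero_div] at hxd
      rw [hxd] at h2
      linarith
    refine ⟨N + 1, 1, le_refl 1, fun t ht => ?_⟩
    have hn1 : N < N + 1 + t * 1 := by omega
    have hn2 : N + 1 + t * 1 ≤ N + i := by omega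
    set n := N + 1 + t * 1 with hn
    have hyn : x - 1 / 2 ^ n ≤ y := by
      have hle : (1:ℝ) / 2 ^ (N + i) ≤ 1 / 2 ^ n := by
        apply div_le_div_of_nonneg_left (by norm_num) (by positivity)
        exact pow_le_pow_right₀ one_le_two hn2
      linarith
    have e2 : (m : ℝ) * 2 ^ (n - N) = x * 2 ^ n := by
      have h2N : (2:ℝ) ^ n = 2 ^ (n - N) * 2 ^ N := by
        rw [← pow_add]
        congr 1
        omega
      rw [hxd, div_mul_eq_mul_div, h2N]
      field_simp
    have hfl : ⌊y * 2 ^ n⌋ = m * 2 ^ (n - N) - 1 := by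
      rw [Int.floor_eq_iff]
      have e1 : ((m * 2 ^ (n - N) - 1 : ℤ) : ℝ) = (m : ℝ) * 2 ^ (n - N) - 1 := by
        push_cast; ring
      constructor
      · rw [e1, e2]
        have hp2 : (0:ℝ) < 2 ^ n := by positivity
        have h3 := mul_le_mul_of_nonneg_right hyn (le_of_lt hp2)
        rw [sub_mul, div_mul_cancel₀ _ (by positivity : (2:ℝ) ^ n ≠ 0)] at h3
        linarith
      · rw [e1, e2]
        have hp2 : (0:ℝ) < 2 ^ n := by positivity
        nlinarith [h2]
    show digit y (N + 1 + t * 1) = 1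
    rw [digit, ← hn, hfl]
    obtain ⟨k, hk⟩ : ∃ k, n - N = k + 1 := ⟨n - N - 1, by omega⟩
    have hdvd : (2:ℤ) ∣ m * 2 ^ (n - N) := ⟨m * 2 ^ k, by rw [hk]; ring⟩
    have hMpos : 0 < m * 2 ^ (n - N) :=
      mul_pos (by omega) (pow_pos (by norm_num) _)
    omega
  -- choose the radius
  by_cases hdy : x = (m : ℝ) / 2 ^ N
  · refine ⟨min (((m : ℝ) + 1) / 2 ^ N - x) (1 / 2 ^ (N + i)),
      lt_min (by linarith) (by positivity), ?_⟩
    rintro ⟨y, hy0, hy1⟩ hq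
    simp only [Metric.mem_ball, Subtype.dist_eq, Real.dist_eq] at hq
    simp only [mem_compl_iff, mem_setOf_eq, F, not_and, not_not]
    intro _
    rcases le_or_gt x y with h | h
    · refine key y (hdy.symm.le.trans h) ?_
      obtain ⟨hq1, hq2⟩ := abs_lt.1 hq
      have := min_le_left (((m : ℝ) + 1) / 2 ^ N - x) (1 / 2 ^ (N + i))
      linarith
    · refine left_dyadic y hy0 hdy ?_ h
      obtain ⟨hq1, hq2⟩ := abs_lt.1 hq
      have := min_le_right (((m : ℝ) + 1) / 2 ^ N - x) (1 / 2 ^ (N + i))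
      linarith
  · have hlo' : (m : ℝ) / 2 ^ N < x := lt_of_le_of_ne hlo (Ne.symm hdy)
    refine ⟨min (((m : ℝ) + 1) / 2 ^ N - x) (x - (m : ℝ) / 2 ^ N), lt_min (by linarith) (by linarith), ?_⟩
    rintro ⟨y, hy0, hy1⟩ hq
    simp only [Metric.mem_ball, Subtype.dist_eq, Real.dist_eq] at hq
    simp only [mem_compl_iff, mem_setOf_eq, F, not_and, not_not]
    intro _
    obtain ⟨hq1, hq2⟩ := abs_lt.1 hq
    have h1 := min_le_left (((m : ℝ) + 1) / 2 ^ N - x) (x - (m : ℝ) / 2 ^ N)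
    have h2 := min_le_right (((m : ℝ) + 1) / 2 ^ N - x) (x - (m : ℝ) / 2 ^ N)
    exact key y (by linarith) (by linarith)
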